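/- Fix an integer $n \ge 2$. For $L > 0$ and $t \ge 1$ define the tail integral $I_+(L,t) = \int_{(n-1)t + L\sqrt{t}}^{\infty} t^{-n/2}\, e^{-(r-(n-1)t)^2/(4t)}\, (1+r+t)^{(n-3)/2} (1+r)\, dr$. Then $I_+(L,t) \to 0$ as $L \to \infty$ uniformly in $t$: for every $\varepsilon > 0$ there exists $L_0 > 0$ such that $I_+(L,t) \le \varepsilon$ for all $L \ge L_0$ and all $t \ge 1$. -/

import Mathlib

/-!
Write `r = (n-1)t + √t s`, so that `r` lies beyond the line exactly when `s > L` and the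
Gaussian factor becomes `exp (-s²/4)`. For `t ≥ 1` both `1 + r + t` and `1 + r` lie between
`t` and `(n+1)(1+s) t`, so the polynomial factors cost at most `((n+1)(1+s))^(n+1)` times a
power of `t`, and the powers of `t` combine to `t^(-1/2) = 1/√t`. Since
`(1+s)^(n+1) exp (-s²/4) ≤ exp (-s)` once `s ≥ 4(n+2)`, the integrand is dominated by
`(n+1)^(n+1)` times the exponential density `(1/√t) exp (-(r - (n-1)t)/√t)`, whose mass
beyond the line is `exp (-L)`, independently of `t`.
-/

open Real Filter MeasureTheory

/-- The tail integral `I₊(L,t)` measuring the heat-kernel mass of `ℍⁿ` located beyond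
the line `r = (n-1)t + L√t`. -/
noncomputable def tailIntegral (n : ℕ) (L t : ℝ) : ℝ :=
  ∫ r in Set.Ioi (((n : ℝ) - 1) * t + L * Real.sqrt t),
    t ^ (-(n : ℝ) / 2) * Real.exp (-(r - ((n : ℝ) - 1) * t) ^ 2 / (4 * t)) *
      (1 + r + t) ^ (((n : ℝ) - 3) / 2) * (1 + r)

theorem exp_neg_sub_div (r c : ℝ) {σ : ℝ} (hσ : σ ≠ 0) :
    exp (-(r - c) / σ) = exp (c / σ) * exp (-σ⁻¹ * r) := by
  rw [← exp_add]
  congr 1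
  field_simp
  ring

theorem integrableOn_exp_neg_sub_div_Ioi (a c : ℝ) {σ : ℝ} (hσ : 0 < σ) :
    IntegrableOn (fun r => exp (-(r - c) / σ)) (Set.Ioi a) := by
  simp_rw [exp_neg_sub_div _ c hσ.ne']
  exact (integrableOn_exp_mul_Ioi (neg_lt_zero.mpr (inv_pos.mpr hσ)) a).const_mul _

theorem integral_exp_neg_sub_div_Ioi (a c : ℝ) {σ : ℝ} (hσ : 0 < σ) :
    ∫ r in Set.Ioi a, σ⁻¹ * exp (-(r - c) / σ) = exp (-(a - c) / σ) := by
  simp_rw [exp_neg_sub_div _ c hσ.ne', integral_const_mul,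
    integral_exp_mul_Ioi (neg_lt_zero.mpr (inv_pos.mpr hσ))]
  rw [neg_div_neg_eq, div_inv_eq_mul]
  field_simp

theorem rpow_le_pow_mul_rpow {x t K p : ℝ} {m : ℕ} (ht : 0 < t) (htx : t ≤ x)
    (hxK : x ≤ K * t) (hp : |p| ≤ m) : x ^ p ≤ K ^ m * t ^ p := by
  have hK : 1 ≤ K := le_of_mul_le_mul_right (by linarith) ht
  have hx : 1 ≤ x / t := (one_le_div ht).mpr htx
  calc x ^ p = (x / t) ^ p * t ^ p := by
        rw [div_rpow (ht.le.trans htx) ht.le, div_mul_cancel₀ _ (rpow_pos_of_pos ht p).ne']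
    _ ≤ K ^ (m : ℝ) * t ^ p := by
        gcongr
        calc (x / t) ^ p ≤ (x / t) ^ |p| := rpow_le_rpow_of_exponent_le hx (le_abs_self p)
          _ ≤ K ^ |p| := rpow_le_rpow (by linarith) ((div_le_iff₀ ht).mpr hxK) (abs_nonneg p)
          _ ≤ K ^ (m : ℝ) := rpow_le_rpow_of_exponent_le hK hp
    _ = K ^ m * t ^ p := by rw [rpow_natCast]

theorem one_add_pow_mul_exp_neg_sq_le {s : ℝ} {m : ℕ} (hs : 4 * ((m : ℝ) + 1) ≤ s) :
    (1 + s) ^ m * exp (-s ^ 2 / 4) ≤ exp (-s) := by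
  have hs0 : 0 ≤ s := le_trans (by positivity) hs
  calc (1 + s) ^ m * exp (-s ^ 2 / 4) ≤ exp s ^ m * exp (-s ^ 2 / 4) := by
        gcongr
        linarith [add_one_le_exp s]
    _ = exp (m * s - s ^ 2 / 4) := by rw [← exp_nat_mul, ← exp_add]; ring_nf
    _ ≤ exp (-s) := exp_le_exp.mpr (by nlinarith)

noncomputable def heatTailDensity (n : ℕ) (t r : ℝ) : ℝ :=
  t ^ (-(n : ℝ) / 2) * exp (-(r - ((n : ℝ) - 1) * t) ^ 2 / (4 * t)) *
    (1 + r + t) ^ (((n : ℝ) - 3) / 2) * (1 + r)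

theorem tailIntegral_eq (n : ℕ) (L t : ℝ) :
    tailIntegral n L t =
      ∫ r in Set.Ioi (((n : ℝ) - 1) * t + L * sqrt t), heatTailDensity n t r :=
  rfl

theorem heatTailDensity_nonneg (n : ℕ) {t r : ℝ} (ht : 0 < t) (hr : 0 ≤ r) :
    0 ≤ heatTailDensity n t r := by
  unfold heatTailDensity
  positivity

theorem heatTailDensity_le {n : ℕ} {t s : ℝ} (hn : 1 ≤ n) (ht : 1 ≤ t)
    (hs : 4 * ((n : ℝ) + 2) ≤ s) :
    heatTailDensity n t (((n : ℝ) - 1) * t + sqrt t * s) ≤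
      ((n : ℝ) + 1) ^ (n + 1) * ((sqrt t)⁻¹ * exp (-s)) := by
  have ht0 : 0 < t := by linarith
  have hn1 : (1 : ℝ) ≤ n := by exact_mod_cast hn
  have hs0 : 0 ≤ s := le_trans (by positivity) hs
  have hσ1 : 1 ≤ sqrt t := one_le_sqrt.mpr ht
  have hσt : sqrt t ≤ t := by nlinarith [sq_sqrt ht0.le]
  set r := ((n : ℝ) - 1) * t + sqrt t * s with hr
  set K := ((n : ℝ) + 1) * (1 + s) with hK
  set p := ((n : ℝ) - 3) / 2 with hp
  have hr0 : 0 ≤ r := by positivity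
  have hn0 : (0 : ℝ) ≤ n := n.cast_nonneg
  have hrK : 1 + r + t ≤ K * t := by
    rw [hr, hK]
    nlinarith [mul_le_mul_of_nonneg_right hσt hs0, mul_nonneg (mul_nonneg hn0 ht0.le) hs0]
  have hgauss : -(r - ((n : ℝ) - 1) * t) ^ 2 / (4 * t) = -s ^ 2 / 4 := by
    simp only [r, add_sub_cancel_left, mul_pow, sq_sqrt ht0.le]
    field_simp
  have hpow : (1 + r + t) ^ p ≤ K ^ n * t ^ p :=
    rpow_le_pow_mul_rpow ht0 (by linarith) hrK (by rw [abs_le, hp]; constructor <;> linarith)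
  have ht_pow : t ^ (-(n : ℝ) / 2) * t ^ p * t = (sqrt t)⁻¹ := by
    rw [sqrt_eq_rpow, ← rpow_neg ht0.le, ← rpow_add ht0, ← rpow_add_one ht0.ne']
    congr 1
    ring
  calc heatTailDensity n t r
      ≤ t ^ (-(n : ℝ) / 2) * exp (-s ^ 2 / 4) * (K ^ n * t ^ p) * (K * t) := by
        unfold heatTailDensity
        rw [hgauss]
        gcongr
        linarith
    _ = ((n : ℝ) + 1) ^ (n + 1) *
          ((t ^ (-(n : ℝ) / 2) * t ^ p * t) * ((1 + s) ^ (n + 1) * exp (-s ^ 2 / 4))) := by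
        simp only [K, mul_pow]
        ring
    _ ≤ ((n : ℝ) + 1) ^ (n + 1) * ((sqrt t)⁻¹ * exp (-s)) := by
        rw [ht_pow]
        gcongr
        exact one_add_pow_mul_exp_neg_sq_le (s := s) (m := n + 1) (by push_cast; linarith)

theorem tailIntegral_le {n : ℕ} {L t : ℝ} (hn : 1 ≤ n) (ht : 1 ≤ t)
    (hL : 4 * ((n : ℝ) + 2) ≤ L) :
    tailIntegral n L t ≤ ((n : ℝ) + 1) ^ (n + 1) * exp (-L) := by
  have hσ : 0 < sqrt t := sqrt_pos.mpr (by linarith)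
  set c := ((n : ℝ) - 1) * t
  have hc : 0 ≤ c := mul_nonneg (by simpa using hn) (by linarith)
  have hL0 : 0 ≤ L := le_trans (by positivity) hL
  have hbound : ∀ r ∈ Set.Ioi (c + L * sqrt t), heatTailDensity n t r ≤
      ((n : ℝ) + 1) ^ (n + 1) * ((sqrt t)⁻¹ * exp (-(r - c) / sqrt t)) := by
    intro r hr
    have hs : L < (r - c) / sqrt t := (lt_div_iff₀ hσ).mpr (by linarith [hr.out])
    have hdens := heatTailDensity_le (s := (r - c) / sqrt t) hn ht (by linarith)
    rwa [mul_div_cancel₀ (r - c) hσ.ne', add_sub_cancel, ← neg_div] at hdens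
  calc tailIntegral n L t
      ≤ ∫ r in Set.Ioi (c + L * sqrt t),
          ((n : ℝ) + 1) ^ (n + 1) * ((sqrt t)⁻¹ * exp (-(r - c) / sqrt t)) := by
        rw [tailIntegral_eq]
        refine integral_mono_of_nonneg ?_ ?_ ?_
        · refine (ae_restrict_iff' measurableSet_Ioi).mpr (ae_of_all _ fun r hr => ?_)
          exact heatTailDensity_nonneg n (by linarith) (by nlinarith [hr.out])
        · exact ((integrableOn_exp_neg_sub_div_Ioi _ c hσ).const_mul _).const_mul _
        · exact (ae_restrict_iff' measurableSet_Ioi).mpr (ae_of_all _ hbound)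
    _ = ((n : ℝ) + 1) ^ (n + 1) * exp (-L) := by
        rw [integral_const_mul, integral_exp_neg_sub_div_Ioi _ c hσ, add_sub_cancel_left,
          neg_div, mul_div_cancel_right₀ _ hσ.ne']

/-- The tail integral `I₊(L,t)` tends to `0` as `L → ∞`, uniformly in `t ≥ 1`. -/
theorem tailIntegral_uniformly_small (n : ℕ) (hn : 2 ≤ n) :
    ∀ ε > (0 : ℝ), ∃ L₀ > (0 : ℝ), ∀ L ≥ L₀, ∀ t ≥ (1 : ℝ),
      tailIntegral n L t ≤ ε := by
  intro ε hε
  set C := ((n : ℝ) + 1) ^ (n + 1)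
  have hC : 0 < C := by positivity
  refine ⟨max (4 * ((n : ℝ) + 2)) (log (C / ε)), lt_max_of_lt_left (by positivity), ?_⟩
  intro L hL t ht
  calc tailIntegral n L t ≤ C * exp (-L) :=
        tailIntegral_le (by omega) ht (le_of_max_le_left hL)
    _ ≤ C * exp (-log (C / ε)) := by gcongr; exact le_of_max_le_right hL
    _ = ε := by rw [exp_neg, exp_log (by positivity)]; field_simp
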